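/- arXiv:1804.10369 — 2 statements merged into one kernel-verified Lean document; each statement's English description precedes it below -/
import Mathlib

section
/- Let θ₀, σ, θ_∞ ∈ ℂ with θ₀ ∉ ℤ, and set a = (σ − 2θ₀ − θ_∞)/4, b = (σ + 2θ₀ − θ_∞)/4 (so that b − a = θ₀), and assume a ∉ ℤ and b ∉ ℤ. Define the 2×2 matrix V₀ with entries V₁₁ = e^{πi a} Γ(−θ₀)/Γ(1−b), V₁₂ = Γ(−θ₀)/Γ(1+a), V₂₁ = e^{πi b} Γ(θ₀)/Γ(−a), V₂₂ = −Γ(θ₀)/Γ(b). Then det V₀ = 1/θ₀. -/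
open Matrix Complex

/-!
Expanding the determinant, each term contains `Γ(-θ₀) Γ(θ₀)` times the inverse of a reflection
pair: `Γ(1 - b) Γ(b) = π / sin(πb)` and `Γ(1 + a) Γ(-a) = -π / sin(πa)`. What remains is
`e^{πia} sin(πb) - e^{πib} sin(πa) = sin(π(b - a)) = sin(πθ₀)`, which cancels against
`Γ(-θ₀) Γ(θ₀) = -π / (θ₀ sin(πθ₀))`.
-/

open scoped Real

namespace Complex

theorem Gamma_neg_mul_Gamma {z : ℂ} (hz : z ≠ 0) :
    Gamma (-z) * Gamma z = -(π / (z * sin (π * z))) := by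
  have reflection := Gamma_mul_Gamma_one_sub (-z)
  rw [sub_neg_eq_add, add_comm, Gamma_add_one z hz, mul_neg, sin_neg] at reflection
  calc Gamma (-z) * Gamma z = Gamma (-z) * (z * Gamma z) / z := by field_simp
    _ = -(π / (z * sin (π * z))) := by rw [reflection]; ring

theorem Gamma_one_add_mul_Gamma_neg (z : ℂ) :
    Gamma (1 + z) * Gamma (-z) = -(π / sin (π * z)) := by
  rw [mul_comm, ← sub_neg_eq_add, Gamma_mul_Gamma_one_sub, mul_neg, sin_neg, div_neg]

theorem exp_mul_I_mul_sin_sub_exp_mul_I_mul_sin (x y : ℂ) :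
    exp (x * I) * sin y - exp (y * I) * sin x = sin (y - x) := by
  rw [exp_mul_I, exp_mul_I, sin_sub]
  ring

theorem sin_pi_mul_ne_zero {z : ℂ} (hz : ∀ n : ℤ, z ≠ n) : sin (π * z) ≠ 0 := by
  rw [sin_ne_zero_iff]
  intro n hn
  exact hz n (mul_left_cancel₀ (ofReal_ne_zero.mpr Real.pi_ne_zero) (by linear_combination hn))

end Complex

theorem stmt_8_general (θ₀ σ θinf a b : ℂ)
    (hθ₀ : ∀ n : ℤ, θ₀ ≠ (n : ℂ))
    (ha : a = (σ - 2 * θ₀ - θinf) / 4)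
    (hb : b = (σ + 2 * θ₀ - θinf) / 4)
    (V₀ : Matrix (Fin 2) (Fin 2) ℂ)
    (hV₀ : V₀ = !![Complex.exp (Real.pi * I * a) * Complex.Gamma (-θ₀) /
        Complex.Gamma (1 - b),
      Complex.Gamma (-θ₀) / Complex.Gamma (1 + a);
      Complex.exp (Real.pi * I * b) * Complex.Gamma θ₀ / Complex.Gamma (-a),
      -(Complex.Gamma θ₀ / Complex.Gamma b)]) :
    V₀.det = 1 / θ₀ := by
  have hba : b - a = θ₀ := by rw [ha, hb]; ring
  have hθ₀_ne : θ₀ ≠ 0 := by simpa using hθ₀ 0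
  have hsin := sin_pi_mul_ne_zero hθ₀
  rw [hV₀, det_fin_two_of]
  calc _ = -(Gamma (-θ₀) * Gamma θ₀) * (exp (π * I * a) * (Gamma b * Gamma (1 - b))⁻¹
          + exp (π * I * b) * (Gamma (1 + a) * Gamma (-a))⁻¹) := by ring
    _ = π / (θ₀ * sin (π * θ₀)) *
          ((exp (π * I * a) * sin (π * b) - exp (π * I * b) * sin (π * a)) / π) := by
        rw [Gamma_neg_mul_Gamma hθ₀_ne, Gamma_mul_Gamma_one_sub, Gamma_one_add_mul_Gamma_neg,
          inv_neg, inv_div, inv_div]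
        ring
    _ = π / (θ₀ * sin (π * θ₀)) * (sin (π * θ₀) / π) := by
        rw [mul_right_comm (π : ℂ) I a, mul_right_comm (π : ℂ) I b,
          exp_mul_I_mul_sin_sub_exp_mul_I_mul_sin, ← mul_sub, hba]
    _ = 1 / θ₀ := by field_simp

theorem stmt_8 (θ₀ σ θinf a b : ℂ)
    (hθ₀ : ∀ n : ℤ, θ₀ ≠ (n : ℂ))
    (ha : a = (σ - 2 * θ₀ - θinf) / 4)
    (hb : b = (σ + 2 * θ₀ - θinf) / 4)
    (haZ : ∀ n : ℤ, a ≠ (n : ℂ))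
    (hbZ : ∀ n : ℤ, b ≠ (n : ℂ))
    (V₀ : Matrix (Fin 2) (Fin 2) ℂ)
    (hV₀ : V₀ = !![Complex.exp (Real.pi * I * a) * Complex.Gamma (-θ₀) /
        Complex.Gamma (1 - b),
      Complex.Gamma (-θ₀) / Complex.Gamma (1 + a);
      Complex.exp (Real.pi * I * b) * Complex.Gamma θ₀ / Complex.Gamma (-a),
      -(Complex.Gamma θ₀ / Complex.Gamma b)]) :
    V₀.det = 1 / θ₀ :=
  stmt_8_general θ₀ σ θinf a b hθ₀ ha hb V₀ hV₀
end

section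
/- Let σ, θ_∞ ∈ ℂ and let p be a differentiable ℂ-valued function on a domain D ⊆ ℂ satisfying the Riccati equation x·p'(x) + x·p(x) + (1/2)(1 + p(x))(σ − θ_∞ + (σ + θ_∞)p(x)) = 0. Define M(x) = x·diag(0,1) + (1/2)·[[−(σ+θ_∞), −(σ−θ_∞)], [σ+θ_∞, σ−θ_∞]], N(x) = x·diag(0,1) + (1/2)·[[−(σ+θ_∞)(1+p(x)), 0], [σ+θ_∞, σ−θ_∞+(σ+θ_∞)p(x)]], and P(x) = I + p(x)Δ₊. Then the gauge identity x·P'(x) = M(x)·P(x) − P(x)·N(x) holds on D; consequently y = P(x)z transforms the system x·y' = M(x)y into x·z' = N(x)z. -/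
/-! With `P = 1 + p Δ₊`, the commutator `M P - P N` is a multiple of `Δ₊` whose coefficient is
minus the Riccati expression without its `x p'` term, so the Riccati equation turns it into
`x p' Δ₊ = x P'`. -/

open Matrix

theorem gauge_commutator_eq {R : Type*} [CommRing R] (σ θ h x q : R) :
    (x • !![(0 : R), 0; 0, 1] + h • !![-(σ + θ), -(σ - θ); σ + θ, σ - θ]) *
        (1 + q • !![(0 : R), 1; 0, 0]) -
      (1 + q • !![(0 : R), 1; 0, 0]) *
        (x • !![(0 : R), 0; 0, 1] +
          h • !![-(σ + θ) * (1 + q), 0; σ + θ, σ - θ + (σ + θ) * q]) =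
      -(x * q + h * (1 + q) * (σ - θ + (σ + θ) * q)) • !![(0 : R), 1; 0, 0] := by
  ext i j
  fin_cases i <;> fin_cases j <;>
    simp [one_fin_two] <;> ring

theorem stmt_13_general (σ θinf : ℂ) (D : Set ℂ)
    (p p' : ℂ → ℂ)
    (hriccati : ∀ x ∈ D,
      x * p' x + x * p x + (1 / 2) * (1 + p x) * (σ - θinf + (σ + θinf) * p x) = 0)
    (M N P : ℂ → Matrix (Fin 2) (Fin 2) ℂ)
    (hM : ∀ x, M x = x • !![(0 : ℂ), 0; 0, 1] +
      (1 / 2 : ℂ) • !![-(σ + θinf), -(σ - θinf); σ + θinf, σ - θinf])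
    (hN : ∀ x, N x = x • !![(0 : ℂ), 0; 0, 1] +
      (1 / 2 : ℂ) • !![-(σ + θinf) * (1 + p x), 0;
        σ + θinf, σ - θinf + (σ + θinf) * p x])
    (hP : ∀ x, P x = 1 + p x • !![(0 : ℂ), 1; 0, 0]) :
    ∀ x ∈ D, x • (p' x • !![(0 : ℂ), 1; 0, 0]) = M x * P x - P x * N x := by
  intro x hx
  rw [hM, hN, hP, gauge_commutator_eq, smul_smul]
  congr 1
  linear_combination hriccati x hx

theorem stmt_13 (σ θinf : ℂ) (D : Set ℂ)
    (p p' : ℂ → ℂ)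
    (hp : ∀ x ∈ D, HasDerivAt p (p' x) x)
    (hriccati : ∀ x ∈ D,
      x * p' x + x * p x + (1 / 2) * (1 + p x) * (σ - θinf + (σ + θinf) * p x) = 0)
    (M N P : ℂ → Matrix (Fin 2) (Fin 2) ℂ)
    (hM : ∀ x, M x = x • !![(0 : ℂ), 0; 0, 1] +
      (1 / 2 : ℂ) • !![-(σ + θinf), -(σ - θinf); σ + θinf, σ - θinf])
    (hN : ∀ x, N x = x • !![(0 : ℂ), 0; 0, 1] +
      (1 / 2 : ℂ) • !![-(σ + θinf) * (1 + p x), 0;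
        σ + θinf, σ - θinf + (σ + θinf) * p x])
    (hP : ∀ x, P x = 1 + p x • !![(0 : ℂ), 1; 0, 0]) :
    ∀ x ∈ D, x • (p' x • !![(0 : ℂ), 1; 0, 0]) = M x * P x - P x * N x :=
  stmt_13_general σ θinf D p p' hriccati M N P hM hN hP
end
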